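/- arXiv:2502.07523 — 2 statements merged into one kernel-verified Lean document; each statement's English description precedes it below -/
import Mathlib

section
/- Let g : ℝ → ℝ be positively homogeneous of degree 1 and differentiable, and let f(w) = γ·(g(x·w + b) − μ)/σ + β where μ and σ > 0 are treated as constants (not differentiated through, i.e., 'stop-gradient'). Then for every c > 0, the derivative with respect to w satisfies f'(c·w evaluated with bias c·b and statistics computed from the scaled parameters) = (1/c)·f'(w), i.e., the gradient of the batch-normalized output with respect to the weight scales inversely proportionally to the scaling factor c of the parameters. -/
/-! Positive homogeneity of `g` makes the layer with parameters scaled by `c > 0` the original layer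
precomposed with `w ↦ w / c`; the chain rule then contributes the factor `1 / c`. -/

noncomputable def bnOutput (g : ℝ → ℝ) (x b γ β μ σ w : ℝ) : ℝ :=
  γ * (g (x * w + b) - μ) / σ + β

theorem bnOutput_scale_params {g : ℝ → ℝ} (hg : ∀ c > (0 : ℝ), ∀ u : ℝ, g (c * u) = c * g u)
    (x b γ β μ σ : ℝ) {c : ℝ} (hc : 0 < c) (w : ℝ) :
    bnOutput g x (c * b) γ β (c * μ) (c * σ) w = bnOutput g x b γ β μ σ (c⁻¹ * w) := by
  have hpre : x * w + c * b = c * (x * (c⁻¹ * w) + b) := by field_simp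
  unfold bnOutput
  rw [hpre, hg c hc, ← mul_sub, mul_left_comm, mul_div_mul_left _ _ hc.ne']

theorem bn_grad_inverse_scaling_general (g : ℝ → ℝ)
    (hg : ∀ c > (0 : ℝ), ∀ u : ℝ, g (c * u) = c * g u)
    (x b γ β μ σ : ℝ) (c : ℝ) (hc : 0 < c) (w : ℝ) :
    deriv (fun w' : ℝ => γ * (g (x * w' + c * b) - c * μ) / (c * σ) + β) (c * w)
      = (1 / c) * deriv (fun w' : ℝ => γ * (g (x * w' + b) - μ) / σ + β) w := by
  have hscaled : (fun w' : ℝ => γ * (g (x * w' + c * b) - c * μ) / (c * σ) + β)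
      = fun w' => bnOutput g x b γ β μ σ (c⁻¹ * w') :=
    funext (bnOutput_scale_params hg x b γ β μ σ hc)
  rw [hscaled, deriv_comp_mul_left, inv_mul_cancel_left₀ hc.ne', smul_eq_mul, one_div]
  rfl

/-- The gradient of a batch-normalized output with respect to the weight scales
inversely proportionally to the scaling factor `c` of the parameters.  Here the
batch statistics `μ`, `σ` are treated as constants (stop-gradient), and under
scaling of the parameters by `c` they become `c*μ` and `c*σ`. -/
theorem bn_grad_inverse_scaling (g : ℝ → ℝ)
    (hg : ∀ c > (0 : ℝ), ∀ u : ℝ, g (c * u) = c * g u)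
    (hgdiff : Differentiable ℝ g)
    (x b γ β μ σ : ℝ) (hσ : 0 < σ) (c : ℝ) (hc : 0 < c) (w : ℝ) :
    deriv (fun w' : ℝ => γ * (g (x * w' + c * b) - c * μ) / (c * σ) + β) (c * w)
      = (1 / c) * deriv (fun w' : ℝ => γ * (g (x * w' + b) - μ) / σ + β) w :=
  bn_grad_inverse_scaling_general g hg x b γ β μ σ c hc w
end

section
/- Let f : ℝⁿ → ℝ be differentiable and scale-invariant (f(c·w) = f(w) for c > 0). Consider a gradient step w' = w − η·∇f(w) with learning rate η > 0 and w ≠ 0. Then ‖w'‖² = ‖w‖² + η²·‖∇f(w)‖², so the parameter norm is non-decreasing under gradient descent, and strictly increasing whenever ∇f(w) ≠ 0. -/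
/-!
Differentiating `c ↦ f (c • w)` at `c = 1` shows that the derivative of a scale-invariant `f`
vanishes in the radial direction, i.e. `∇f(w) ⟂ w`. The gradient step `w - η ∇f(w)` therefore
adds an orthogonal vector to `w`, and Pythagoras gives `‖w'‖² = ‖w‖² + η² ‖∇f(w)‖²`.
-/

open scoped RealInnerProductSpace

theorem fderiv_apply_self_eq_zero_of_smul_invariant {E F : Type*}
    [NormedAddCommGroup E] [NormedSpace ℝ E] [NormedAddCommGroup F] [NormedSpace ℝ F]
    {f : E → F} {w : E} (hf : DifferentiableAt ℝ f w) (hsi : ∀ c > (0 : ℝ), f (c • w) = f w) :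
    fderiv ℝ f w w = 0 := by
  have hray : HasDerivAt (fun c : ℝ => c • w) w 1 := by
    simpa using (hasDerivAt_id (1 : ℝ)).smul_const w
  have hcomp : HasDerivAt (fun c : ℝ => f (c • w)) (fderiv ℝ f w w) 1 := by
    have hf₁ : HasFDerivAt f (fderiv ℝ f w) ((1 : ℝ) • w) := by
      rw [one_smul]; exact hf.hasFDerivAt
    exact hf₁.comp_hasDerivAt 1 hray
  have hconst : HasDerivAt (fun c : ℝ => f (c • w)) 0 1 := by
    refine (hasDerivAt_const (1 : ℝ) (f w)).congr_of_eventuallyEq ?_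
    filter_upwards [Ioi_mem_nhds one_pos] with c hc using hsi c hc
  exact hcomp.unique hconst

theorem inner_gradient_self_eq_zero_of_smul_invariant {E : Type*}
    [NormedAddCommGroup E] [InnerProductSpace ℝ E] [CompleteSpace E]
    {f : E → ℝ} {w : E} (hf : DifferentiableAt ℝ f w) (hsi : ∀ c > (0 : ℝ), f (c • w) = f w) :
    ⟪gradient f w, w⟫ = 0 := by
  rw [gradient, InnerProductSpace.toDual_symm_apply,
    fderiv_apply_self_eq_zero_of_smul_invariant hf hsi]

theorem norm_sub_smul_sq_of_inner_eq_zero {E : Type*}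
    [SeminormedAddCommGroup E] [InnerProductSpace ℝ E]
    {v w : E} (h : ⟪v, w⟫ = 0) (η : ℝ) :
    ‖w - η • v‖ ^ 2 = ‖w‖ ^ 2 + η ^ 2 * ‖v‖ ^ 2 := by
  have hw : ⟪w, η • v⟫ = 0 := by rw [inner_smul_right, real_inner_comm, h, mul_zero]
  rw [sq, sq, norm_sub_sq_eq_norm_sq_add_norm_sq_real hw, norm_smul, Real.norm_eq_abs,
    mul_mul_mul_comm, abs_mul_abs_self]
  ring

/-- Under gradient descent on a scale-invariant function, the squared parameter
norm satisfies the Pythagorean identity, so it is non-decreasing and strictly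
increasing whenever the gradient is nonzero. -/
theorem norm_increase_gradient_step {n : ℕ}
    (f : EuclideanSpace ℝ (Fin n) → ℝ) (hf : Differentiable ℝ f)
    (hsi : ∀ c > (0 : ℝ), ∀ w : EuclideanSpace ℝ (Fin n), w ≠ 0 → f (c • w) = f w)
    (η : ℝ) (hη : 0 < η) (w w' : EuclideanSpace ℝ (Fin n)) (hw : w ≠ 0)
    (hstep : w' = w - η • gradient f w) :
    ‖w'‖ ^ 2 = ‖w‖ ^ 2 + η ^ 2 * ‖gradient f w‖ ^ 2 ∧
      ‖w‖ ≤ ‖w'‖ ∧ (gradient f w ≠ 0 → ‖w‖ < ‖w'‖) := by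
  have horth : ⟪gradient f w, w⟫ = 0 :=
    inner_gradient_self_eq_zero_of_smul_invariant (hf w) fun c hc => hsi c hc w hw
  have hpy : ‖w'‖ ^ 2 = ‖w‖ ^ 2 + η ^ 2 * ‖gradient f w‖ ^ 2 := by
    rw [hstep, norm_sub_smul_sq_of_inner_eq_zero horth]
  refine ⟨hpy, ?_, fun hg => ?_⟩
  · rw [← pow_le_pow_iff_left₀ (norm_nonneg w) (norm_nonneg w') two_ne_zero, hpy]
    exact le_add_of_nonneg_right (by positivity)
  · rw [← pow_lt_pow_iff_left₀ (norm_nonneg w) (norm_nonneg w') two_ne_zero, hpy]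
    exact lt_add_of_pos_right _ (mul_pos (pow_pos hη 2) (pow_pos (norm_pos_iff.mpr hg) 2))
end
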